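/- Let (Ω, F, P) be a probability space, let I ⊆ ℕ^d be a finite nonempty set, and for each ℓ ∈ I let N_ℓ be a positive integer. Suppose the real random variables (Y_{ℓ,n})_{ℓ ∈ I, 0 ≤ n < N_ℓ} are jointly independent and square-integrable, with E[Y_{ℓ,n}] = μ_ℓ and Var[Y_{ℓ,n}] = V_ℓ for all n. Suppose further that (μ_ℓ)_{ℓ ∈ ℕ^d} is an absolutely summable family (extending μ to all of ℕ^d) with sum S = Σ_{ℓ ∈ ℕ^d} μ_ℓ. Then the Multi-Index Monte Carlo estimator Q = Σ_{ℓ ∈ I} (1/N_ℓ) Σ_{n=0}^{N_ℓ−1} Y_{ℓ,n} has mean square error E[(Q − S)²] = Σ_{ℓ ∈ I} V_ℓ / N_ℓ + (Σ_{ℓ ∉ I} μ_ℓ)². -/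

import Mathlib

/-!
The estimator `Q` is square-integrable, so its mean square error about the constant `S`
splits as `Var[Q] + (E[Q] - S)²`. Writing `Q` as one sum over all pairs `(ℓ, n)` of the
independent terms `Y ℓ n / N ℓ`, its variance is `Σ_{ℓ ∈ I} N ℓ · V ℓ / N ℓ² = Σ_{ℓ ∈ I} V ℓ / N ℓ`,
while its mean is `Σ_{ℓ ∈ I} μ ℓ`; absolute summability of `μ` lets `S` split into this finite
sum plus the sum over the complement of `I`, which is therefore the bias.
-/

open MeasureTheory ProbabilityTheory

section MeanSquareError

variable {Ω : Type*} [MeasurableSpace Ω] {P : Measure Ω}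

lemma integral_sub_const_sq [IsProbabilityMeasure P] {X : Ω → ℝ} (hX : MemLp X 2 P) (c : ℝ) :
    ∫ ω, (X ω - c) ^ 2 ∂P = variance X P + (∫ ω, X ω ∂P - c) ^ 2 := by
  have h := variance_eq_sub (X := fun ω => X ω - c) (hX.sub (memLp_const c))
  rw [variance_sub_const hX.aestronglyMeasurable, integral_sub (hX.integrable one_le_two)
    (integrable_const c)] at h
  simp only [Pi.pow_apply, integral_const, probReal_univ, smul_eq_mul, one_mul] at h
  linarith

lemma variance_sum_const_mul_of_pairwise_indepFun {κ : Type*} [Fintype κ] {X : κ → Ω → ℝ}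
    (hX : ∀ k, MemLp (X k) 2 P) (hindep : Pairwise fun i j => X i ⟂ᵢ[P] X j) (a : κ → ℝ) :
    variance (fun ω => ∑ k, a k * X k ω) P = ∑ k, a k ^ 2 * variance (X k) P := by
  have hsum : (fun ω => ∑ k, a k * X k ω) = ∑ k, fun ω => a k * X k ω := by
    ext ω; simp
  rw [hsum, IndepFun.variance_sum (fun k _ => (hX k).const_mul (a k))
    (fun i _ j _ hij => (hindep hij).comp (measurable_const_mul _) (measurable_const_mul _))]
  simp only [variance_const_mul]

end MeanSquareError

section Estimator

variable {Ω ι : Type*} {I : Finset ι} {N : ι → ℕ} {Y : ι → ℕ → Ω → ℝ}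

noncomputable def mimcEstimator (I : Finset ι) (N : ι → ℕ) (Y : ι → ℕ → Ω → ℝ) (ω : Ω) :
    ℝ :=
  ∑ ℓ ∈ I, (1 / (N ℓ : ℝ)) * ∑ n ∈ Finset.range (N ℓ), Y ℓ n ω

lemma sum_sigma_fin_eq_sum_range {M : Type*} [AddCommMonoid M] (f : ι → ℕ → M) :
    ∑ p : (Σ ℓ : {x // x ∈ I}, Fin (N ℓ.1)), f p.1 p.2 =
      ∑ ℓ ∈ I, ∑ n ∈ Finset.range (N ℓ), f ℓ n := by
  rw [Fintype.sum_sigma, ← Finset.sum_coe_sort I]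
  exact Finset.sum_congr rfl fun ℓ _ => Fin.sum_univ_eq_sum_range (f ℓ) _

lemma mimcEstimator_eq_sum_sigma (ω : Ω) :
    mimcEstimator I N Y ω =
      ∑ p : (Σ ℓ : {x // x ∈ I}, Fin (N ℓ.1)), (1 / (N p.1 : ℝ)) * Y p.1 p.2 ω := by
  rw [sum_sigma_fin_eq_sum_range fun ℓ n => (1 / (N ℓ : ℝ)) * Y ℓ n ω]
  simp only [mimcEstimator, Finset.mul_sum]

variable [MeasurableSpace Ω] {P : Measure Ω}

lemma memLp_mimcEstimator (hL2 : ∀ ℓ ∈ I, ∀ n < N ℓ, MemLp (Y ℓ n) 2 P) :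
    MemLp (mimcEstimator I N Y) 2 P :=
  memLp_finsetSum I fun ℓ hℓ => (memLp_finsetSum _ fun n hn =>
    hL2 ℓ hℓ n (Finset.mem_range.mp hn)).const_mul _

lemma integral_mimcEstimator {μ : ι → ℝ} (hN : ∀ ℓ ∈ I, 0 < N ℓ)
    (hint : ∀ ℓ ∈ I, ∀ n < N ℓ, Integrable (Y ℓ n) P)
    (hmean : ∀ ℓ ∈ I, ∀ n < N ℓ, ∫ ω, Y ℓ n ω ∂P = μ ℓ) :
    ∫ ω, mimcEstimator I N Y ω ∂P = ∑ ℓ ∈ I, μ ℓ := by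
  have hint_level : ∀ ℓ ∈ I, Integrable (fun ω => ∑ n ∈ Finset.range (N ℓ), Y ℓ n ω) P :=
    fun ℓ hℓ => integrable_finsetSum _ fun n hn => hint ℓ hℓ n (Finset.mem_range.mp hn)
  simp only [mimcEstimator]
  rw [integral_finsetSum I fun ℓ hℓ => (hint_level ℓ hℓ).const_mul _]
  refine Finset.sum_congr rfl fun ℓ hℓ => ?_
  rw [integral_const_mul,
    integral_finsetSum _ fun n hn => hint ℓ hℓ n (Finset.mem_range.mp hn),
    Finset.sum_congr rfl fun n hn => hmean ℓ hℓ n (Finset.mem_range.mp hn)]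
  have : (N ℓ : ℝ) ≠ 0 := by exact_mod_cast (hN ℓ hℓ).ne'
  simp only [Finset.sum_const, Finset.card_range, nsmul_eq_mul]
  field_simp

lemma variance_mimcEstimator {V : ι → ℝ} (hN : ∀ ℓ ∈ I, 0 < N ℓ)
    (hindep : iIndepFun (fun p : (Σ ℓ : {x // x ∈ I}, Fin (N ℓ.1)) => Y p.1 p.2) P)
    (hL2 : ∀ ℓ ∈ I, ∀ n < N ℓ, MemLp (Y ℓ n) 2 P)
    (hvar : ∀ ℓ ∈ I, ∀ n < N ℓ, variance (Y ℓ n) P = V ℓ) :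
    variance (mimcEstimator I N Y) P = ∑ ℓ ∈ I, V ℓ / (N ℓ : ℝ) := by
  rw [funext mimcEstimator_eq_sum_sigma,
    variance_sum_const_mul_of_pairwise_indepFun (fun p => hL2 p.1 p.1.2 p.2 p.2.isLt)
      (fun _ _ hpq => hindep.indepFun hpq),
    sum_sigma_fin_eq_sum_range fun ℓ n => (1 / (N ℓ : ℝ)) ^ 2 * variance (Y ℓ n) P]
  refine Finset.sum_congr rfl fun ℓ hℓ => ?_
  rw [Finset.sum_congr rfl fun n hn => by rw [hvar ℓ hℓ n (Finset.mem_range.mp hn)]]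
  have : (N ℓ : ℝ) ≠ 0 := by exact_mod_cast (hN ℓ hℓ).ne'
  simp only [Finset.sum_const, Finset.card_range, nsmul_eq_mul]
  field_simp

end Estimator

theorem mimc_estimator_mse_general
    {Ω : Type*} [MeasurableSpace Ω] (P : Measure Ω) [IsProbabilityMeasure P]
    (d : ℕ) (I : Finset (Fin d → ℕ))
    (N : (Fin d → ℕ) → ℕ) (hN : ∀ ℓ ∈ I, 0 < N ℓ)
    (Y : (Fin d → ℕ) → ℕ → Ω → ℝ) (μ V : (Fin d → ℕ) → ℝ)
    (hindep : iIndepFun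
      (fun p : (Σ ℓ : {x // x ∈ I}, Fin (N ℓ.1)) => Y p.1 p.2) P)
    (hL2 : ∀ ℓ ∈ I, ∀ n < N ℓ, MemLp (Y ℓ n) 2 P)
    (hmean : ∀ ℓ ∈ I, ∀ n < N ℓ, (∫ ω, Y ℓ n ω ∂P) = μ ℓ)
    (hvar : ∀ ℓ ∈ I, ∀ n < N ℓ, variance (Y ℓ n) P = V ℓ)
    (hsum : Summable fun ℓ : Fin d → ℕ => |μ ℓ|)
    (S : ℝ) (hS : S = ∑' ℓ : Fin d → ℕ, μ ℓ) :
    ∫ ω, ((∑ ℓ ∈ I, (1 / (N ℓ : ℝ)) * ∑ n ∈ Finset.range (N ℓ), Y ℓ n ω) - S) ^ 2 ∂P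
      = (∑ ℓ ∈ I, V ℓ / (N ℓ : ℝ))
        + (∑' ℓ : {ℓ : Fin d → ℕ // ℓ ∉ I}, μ ℓ.1) ^ 2 := by
  have hbias := hsum.of_abs.sum_add_tsum_subtype_compl I
  have hQ_mean := integral_mimcEstimator hN
    (fun ℓ hℓ n hn => (hL2 ℓ hℓ n hn).integrable one_le_two) hmean
  refine (integral_sub_const_sq (memLp_mimcEstimator hL2) S).trans ?_
  rw [variance_mimcEstimator hN hindep hL2 hvar, hQ_mean, hS, ← hbias]
  ring

/-- Mean square error decomposition of the Multi-Index Monte Carlo estimator: if the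
samples `Y ℓ n` (`ℓ ∈ I`, `0 ≤ n < N ℓ`) are jointly independent, square-integrable, with
mean `μ ℓ` and variance `V ℓ`, and `(μ ℓ)_{ℓ ∈ ℕ^d}` is absolutely summable with sum `S`,
then `E[(Q - S)²] = Σ_{ℓ ∈ I} V ℓ / N ℓ + (Σ_{ℓ ∉ I} μ ℓ)²` for the estimator
`Q = Σ_{ℓ ∈ I} (1/N_ℓ) Σ_{n < N_ℓ} Y_{ℓ,n}`. -/
theorem mimc_estimator_mse
    {Ω : Type*} [MeasurableSpace Ω] (P : Measure Ω) [IsProbabilityMeasure P]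
    (d : ℕ) (I : Finset (Fin d → ℕ)) (hI : I.Nonempty)
    (N : (Fin d → ℕ) → ℕ) (hN : ∀ ℓ ∈ I, 0 < N ℓ)
    (Y : (Fin d → ℕ) → ℕ → Ω → ℝ) (μ V : (Fin d → ℕ) → ℝ)
    (hindep : iIndepFun
      (fun p : (Σ ℓ : {x // x ∈ I}, Fin (N ℓ.1)) => Y p.1 p.2) P)
    (hL2 : ∀ ℓ ∈ I, ∀ n < N ℓ, MemLp (Y ℓ n) 2 P)
    (hmean : ∀ ℓ ∈ I, ∀ n < N ℓ, (∫ ω, Y ℓ n ω ∂P) = μ ℓ)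
    (hvar : ∀ ℓ ∈ I, ∀ n < N ℓ, variance (Y ℓ n) P = V ℓ)
    (hsum : Summable fun ℓ : Fin d → ℕ => |μ ℓ|)
    (S : ℝ) (hS : S = ∑' ℓ : Fin d → ℕ, μ ℓ) :
    ∫ ω, ((∑ ℓ ∈ I, (1 / (N ℓ : ℝ)) * ∑ n ∈ Finset.range (N ℓ), Y ℓ n ω) - S) ^ 2 ∂P
      = (∑ ℓ ∈ I, V ℓ / (N ℓ : ℝ))
        + (∑' ℓ : {ℓ : Fin d → ℕ // ℓ ∉ I}, μ ℓ.1) ^ 2 :=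
  mimc_estimator_mse_general P d I N hN Y μ V hindep hL2 hmean hvar hsum S hS
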